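/- arXiv:2006.08090 — 3 statements merged into one kernel-verified Lean document; each statement's English description precedes it below -/
import Mathlib

section
/- For every n ∈ ℕ one has ∑_{ε ∈ Λ^d} C_n^{(ε)} C_n^{(ε)} = I, where I denotes the identity operator on H. -/
/- Common setup: quantum Bernoulli noises on `ℋ = ℓ²(Γ)`, `Γ` = finite subsets of `ℕ`. -/

noncomputable section

open ContinuousLinearMap Filter

/-- The space `ℋ = ℓ²(Γ)` of square-integrable Bernoulli functionals,
where `Γ` is the set of finite subsets of `ℕ`. -/
abbrev ℋ : Type := lp (fun _ : Finset ℕ => ℂ) 2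

/-- The canonical orthonormal basis `{Z_σ : σ ∈ Γ}` of `ℋ`. -/
def Z (σ : Finset ℕ) : ℋ := lp.single 2 σ 1

/-- `QBN a` says that `a k` is the annihilation operator `∂_k` acting on Bernoulli
functionals: `∂_k Z_σ = 1_σ(k) Z_{σ\k}` and `∂_k* Z_σ = (1 - 1_σ(k)) Z_{σ∪k}`. -/
def QBN (a : ℕ → ℋ →L[ℂ] ℋ) : Prop :=
  (∀ (k : ℕ) (σ : Finset ℕ), a k (Z σ) = if k ∈ σ then Z (σ.erase k) else 0) ∧
  (∀ (k : ℕ) (σ : Finset ℕ), adjoint (a k) (Z σ) = if k ∈ σ then 0 else Z (insert k σ))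

/-- `L_n = (∂_n* + ∂_n - I)/2`. -/
def Lop (a : ℕ → ℋ →L[ℂ] ℋ) (n : ℕ) : ℋ →L[ℂ] ℋ := (2 : ℂ)⁻¹ • (adjoint (a n) + a n - 1)

/-- `R_n = (∂_n* + ∂_n + I)/2`. -/
def Rop (a : ℕ → ℋ →L[ℂ] ℋ) (n : ℕ) : ℋ →L[ℂ] ℋ := (2 : ℂ)⁻¹ • (adjoint (a n) + a n + 1)

/-- `Λ = {-1, 1} ⊆ ℤ`. -/
def Lam : Finset ℤ := {-1, 1}

/-- `Λ^d`, as a finite set of vectors in `ℤ^d`. -/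
def LamD (d : ℕ) : Finset (Fin d → ℤ) := Fintype.piFinset fun _ => Lam

/-- `B_n^{(ε)}`: equals `L_n` if `ε = -1` and `R_n` if `ε = +1`. -/
def Bop (a : ℕ → ℋ →L[ℂ] ℋ) (n : ℕ) (e : ℤ) : ℋ →L[ℂ] ℋ :=
  if e = -1 then Lop a n else Rop a n

/-- A characterization of the `d`-fold Hilbert-space tensor power of `Hs`:
`tpv` is the multilinear map `(u_1, …, u_d) ↦ u_1 ⊗ ⋯ ⊗ u_d`, which satisfies
`⟪⊗u_j, ⊗v_j⟫ = ∏ ⟪u_j, v_j⟫` and has dense span, and `tp` sends a `d`-tuple of bounded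
operators to their tensor product operator, i.e. `(⊗A_j)(⊗u_j) = ⊗(A_j u_j)`. -/
def IsTensorD {Hs : Type} [NormedAddCommGroup Hs] [InnerProductSpace ℂ Hs]
    {d : ℕ} {Hd : Type} [NormedAddCommGroup Hd] [InnerProductSpace ℂ Hd]
    (tpv : MultilinearMap ℂ (fun _ : Fin d => Hs) Hd)
    (tp : (Fin d → Hs →L[ℂ] Hs) → (Hd →L[ℂ] Hd)) : Prop :=
  (∀ u v : Fin d → Hs, (@inner ℂ _ _ (tpv u) (tpv v)) = ∏ j, (@inner ℂ _ _ (u j) (v j))) ∧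
  ((Submodule.span ℂ (Set.range fun u => tpv u)).topologicalClosure = ⊤) ∧
  (∀ (A : Fin d → Hs →L[ℂ] Hs) (u : Fin d → Hs), tp A (tpv u) = tpv fun j => A j (u j))

/-- Conjugation of an operator by a unitary isomorphism `K`: `T ↦ K T K⁻¹`. -/
def conjK {Hs Hd : Type} [NormedAddCommGroup Hs] [InnerProductSpace ℂ Hs]
    [NormedAddCommGroup Hd] [InnerProductSpace ℂ Hd]
    (K : Hd ≃ₗᵢ[ℂ] Hs) (T : Hd →L[ℂ] Hd) : Hs →L[ℂ] Hs :=
  K.toLinearIsometry.toContinuousLinearMap ∘L T ∘L K.symm.toLinearIsometry.toContinuousLinearMap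

/-- `C_n^{(ε)} = K (B_n^{(ε_1)} ⊗ ⋯ ⊗ B_n^{(ε_d)}) K⁻¹` for `ε ∈ Λ^d`. -/
def Cop {d : ℕ} {Hd : Type} [NormedAddCommGroup Hd] [InnerProductSpace ℂ Hd]
    (a : ℕ → ℋ →L[ℂ] ℋ) (tp : (Fin d → ℋ →L[ℂ] ℋ) → (Hd →L[ℂ] Hd))
    (K : Hd ≃ₗᵢ[ℂ] ℋ) (n : ℕ) (v : Fin d → ℤ) : ℋ →L[ℂ] ℋ :=
  conjK K (tp fun j => Bop a n (v j))

/-- The trace of an operator computed relative to an orthonormal basis `b`: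
`Tr T = ∑_i Re ⟪b i, T (b i)⟫` (for positive operators this is the genuine trace). -/
def trB {E : Type} [NormedAddCommGroup E] [InnerProductSpace ℂ E] {ι : Type}
    (b : ι → E) (T : E →L[ℂ] E) : ℝ :=
  ∑' i, (@inner ℂ _ _ (b i) (T (b i))).re

/-- Finiteness (summability) of the trace of `T` relative to the orthonormal basis `b`;
for a positive operator `T` this says exactly that `T` is of trace class. -/
def HasFiniteTrace {E : Type} [NormedAddCommGroup E] [InnerProductSpace ℂ E] {ι : Type}
    (b : ι → E) (T : E →L[ℂ] E) : Prop :=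
  Summable fun i => (@inner ℂ _ _ (b i) (T (b i))).re

/-- The trace on `ℋ`, computed in the canonical ONB `{Z_σ}`. -/
def trH : (ℋ →L[ℂ] ℋ) → ℝ := trB Z

/-- A nucleus with site space `X` on a Hilbert space with orthonormal basis `b`: a family of
positive trace-class operators `ω x` with `∑_x Tr[ω x] = 1`. -/
def IsNucleusOn {E : Type} [NormedAddCommGroup E] [InnerProductSpace ℂ E] [CompleteSpace E]
    {ι X : Type} (b : ι → E) (ω : X → E →L[ℂ] E) : Prop :=
  (∀ x, (ω x).IsPositive) ∧ (∀ x, HasFiniteTrace b (ω x)) ∧ HasSum (fun x => trB b (ω x)) 1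

/-- The one-dimensional map `𝔍_n`: `(𝔍_n ρ)(x) = L_n ρ(x+1) L_n + R_n ρ(x-1) R_n`. -/
def Jmap1 (a : ℕ → ℋ →L[ℂ] ℋ) (n : ℕ) (ρ : ℤ → ℋ →L[ℂ] ℋ) : ℤ → ℋ →L[ℂ] ℋ :=
  fun x => Lop a n * ρ (x + 1) * Lop a n + Rop a n * ρ (x - 1) * Rop a n

/-- The `d`-dimensional map `𝔍_n^{(d)}`:
`(𝔍_n^{(d)} ω)(x) = ∑_{ε ∈ Λ^d} C_n^{(ε)} ω(x-ε) C_n^{(ε)}`. -/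
def JmapD {d : ℕ} {Hd : Type} [NormedAddCommGroup Hd] [InnerProductSpace ℂ Hd]
    (a : ℕ → ℋ →L[ℂ] ℋ) (tp : (Fin d → ℋ →L[ℂ] ℋ) → (Hd →L[ℂ] Hd)) (K : Hd ≃ₗᵢ[ℂ] ℋ)
    (n : ℕ) (ω : (Fin d → ℤ) → ℋ →L[ℂ] ℋ) : (Fin d → ℤ) → ℋ →L[ℂ] ℋ :=
  fun x => ∑ v ∈ LamD d, Cop a tp K n v * ω (x - v) * Cop a tp K n v

/-- The sequence `ρ⁽⁰⁾ = ρ`, `ρ⁽ⁿ⁺¹⁾ = 𝔍_n ρ⁽ⁿ⁾` generated by `ρ` and `(𝔍_n)`. -/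
def seqJ (a : ℕ → ℋ →L[ℂ] ℋ) (ρ : ℤ → ℋ →L[ℂ] ℋ) : ℕ → ℤ → ℋ →L[ℂ] ℋ
  | 0 => ρ
  | n + 1 => Jmap1 a n (seqJ a ρ n)

/-- Regularity of a 1-dimensional nucleus `ρ`:
`lim_n ∑_x e^{itx/√n} Tr[ρ⁽ⁿ⁾(x)] = e^{-t²/2}` for every real `t`. -/
def Regular (a : ℕ → ℋ →L[ℂ] ℋ) (ρ : ℤ → ℋ →L[ℂ] ℋ) : Prop :=
  ∀ t : ℝ, Tendsto (fun n : ℕ => ∑' x : ℤ,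
      Complex.exp (Complex.I * (t : ℂ) * (x : ℂ) / (Real.sqrt n : ℂ)) * (trH (seqJ a ρ n x) : ℂ))
    atTop (nhds (Complex.exp (-(t : ℂ) ^ 2 / 2)))

/-- The rank-one (Dirac) operator `|u⟩⟨v| : w ↦ ⟪v, w⟫ u`. -/
def dyad {E : Type} [NormedAddCommGroup E] [InnerProductSpace ℂ E] (u v : E) : E →L[ℂ] E :=
  (toSpanSingleton ℂ u).comp (innerSL ℂ v)

/-- `ℓ²(ℤ^d)`. -/
abbrev l2Z (d : ℕ) : Type := lp (fun _ : Fin d → ℤ => ℂ) 2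

/-- The canonical orthonormal basis `{δ_x : x ∈ ℤ^d}` of `ℓ²(ℤ^d)`. -/
def deltaV {d : ℕ} (x : Fin d → ℤ) : l2Z d := lp.single 2 x 1

/-- A characterization of the Hilbert-space tensor product `E = ℓ²(ℤ^d) ⊗ Hs`:
`tv` is the bilinear map `(f, u) ↦ f ⊗ u`, with `⟪f⊗u, g⊗v⟫ = ⟪f,g⟫⟪u,v⟫` and dense span,
and `top2` sends a pair of bounded operators to their tensor product operator:
`(A ⊗ B)(f ⊗ u) = (A f) ⊗ (B u)`. -/
def IsTensor2 {d : ℕ} {Hs E : Type} [NormedAddCommGroup Hs] [InnerProductSpace ℂ Hs]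
    [NormedAddCommGroup E] [InnerProductSpace ℂ E]
    (tv : l2Z d →ₗ[ℂ] Hs →ₗ[ℂ] E)
    (top2 : (l2Z d →L[ℂ] l2Z d) → (Hs →L[ℂ] Hs) → (E →L[ℂ] E)) : Prop :=
  (∀ (f g : l2Z d) (u v : Hs),
      (@inner ℂ _ _ (tv f u) (tv g v)) = (@inner ℂ _ _ f g) * (@inner ℂ _ _ u v)) ∧
  ((Submodule.span ℂ {z : E | ∃ f u, z = tv f u}).topologicalClosure = ⊤) ∧
  (∀ (A : l2Z d →L[ℂ] l2Z d) (B : Hs →L[ℂ] Hs) (f : l2Z d) (u : Hs),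
      top2 A B (tv f u) = tv (A f) (B u))

/-- The orthonormal basis `{δ_x ⊗ b_κ}` of the tensor product `ℓ²(ℤ^d) ⊗ Hs` induced by the
canonical basis of `ℓ²(ℤ^d)` and an orthonormal basis `b` of `Hs`. -/
def tbasis {d : ℕ} {Hs E : Type} [NormedAddCommGroup Hs] [InnerProductSpace ℂ Hs]
    [NormedAddCommGroup E] [InnerProductSpace ℂ E]
    (tv : l2Z d →ₗ[ℂ] Hs →ₗ[ℂ] E) {κ : Type} (b : κ → Hs) : (Fin d → ℤ) × κ → E :=
  fun p => tv (deltaV p.1) (b p.2)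

/-- The Kraus operators `M^{(n)}_{x,y} = |δ_x⟩⟨δ_y| ⊗ C_n^{(x-y)}` if `x - y ∈ Λ^d`, else `0`. -/
def Mop {d : ℕ} {Hd E : Type} [NormedAddCommGroup Hd] [InnerProductSpace ℂ Hd]
    [NormedAddCommGroup E] [InnerProductSpace ℂ E]
    (a : ℕ → ℋ →L[ℂ] ℋ) (tp : (Fin d → ℋ →L[ℂ] ℋ) → (Hd →L[ℂ] Hd)) (K : Hd ≃ₗᵢ[ℂ] ℋ)
    (top2 : (l2Z d →L[ℂ] l2Z d) → (ℋ →L[ℂ] ℋ) → (E →L[ℂ] E))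
    (n : ℕ) (x y : Fin d → ℤ) : E →L[ℂ] E :=
  if x - y ∈ LamD d then top2 (dyad (deltaV x) (deltaV y)) (Cop a tp K n (x - y)) else 0

/-- The 1-dimensional nucleus `ρ_σ` concentrated at `0` with value `|Z_σ⟩⟨Z_σ|`. -/
def rhoPoint (σ : Finset ℕ) : ℤ → ℋ →L[ℂ] ℋ := fun x => if x = 0 then dyad (Z σ) (Z σ) else 0

/-- `ℓ²(ℤ^d; ℋ)`, the space of square-summable `ℋ`-valued functions on `ℤ^d`. -/
abbrev l2ZH (d : ℕ) : Type := lp (fun _ : Fin d → ℤ => ℋ) 2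

/-!
`T = ∂_n* + ∂_n` swaps `Z_σ` and `Z_{σ △ {n}}`, so `T² = I` and
`L_n² + R_n² = ((T - I)² + (T + I)²)/4 = (T² + I)/2 = I`. By multilinearity of `⊗`,
`∑_{ε ∈ Λ^d} ⊗_j (B_n^{(ε_j)})²` acts on a product vector `⊗_j u_j` as `⊗_j (L_n² + R_n²) u_j`,
so it is the identity on a dense set, hence everywhere; conjugation by `K` is an algebra
isomorphism and preserves this.
-/

lemma ext_Z {f g : ℋ →L[ℂ] ℋ} (h : ∀ σ, f (Z σ) = g (Z σ)) : f = g :=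
  lp.ext_continuousLinearMap ENNReal.ofNat_ne_top fun σ => ext_ring (h σ)

namespace QBN

variable {a : ℕ → ℋ →L[ℂ] ℋ}

lemma adjoint_add_apply_Z (ha : QBN a) (n : ℕ) (σ : Finset ℕ) :
    (adjoint (a n) + a n) (Z σ) = if n ∈ σ then Z (σ.erase n) else Z (insert n σ) := by
  rw [add_apply, ha.1 n σ, ha.2 n σ]
  split_ifs <;> simp

lemma adjoint_add_mul_self (ha : QBN a) (n : ℕ) :
    (adjoint (a n) + a n) * (adjoint (a n) + a n) = 1 := by
  refine ext_Z fun σ => ?_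
  rw [mul_apply_eq_comp, one_apply_eq_self, ha.adjoint_add_apply_Z]
  by_cases hσ : n ∈ σ
  · rw [if_pos hσ, ha.adjoint_add_apply_Z, if_neg (Finset.notMem_erase n σ),
      Finset.insert_erase hσ]
  · rw [if_neg hσ, ha.adjoint_add_apply_Z, if_pos (Finset.mem_insert_self n σ),
      Finset.erase_insert hσ]

end QBN

lemma half_sub_one_sq_add_half_add_one_sq {𝕜 A : Type*} [Field 𝕜] [CharZero 𝕜] [Ring A]
    [Algebra 𝕜 A] {T : A} (hT : T * T = 1) :
    ((2 : 𝕜)⁻¹ • (T - 1)) * ((2 : 𝕜)⁻¹ • (T - 1)) +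
      ((2 : 𝕜)⁻¹ • (T + 1)) * ((2 : 𝕜)⁻¹ • (T + 1)) = 1 := by
  have h : (T - 1) * (T - 1) + (T + 1) * (T + 1) = (4 : 𝕜) • (1 : A) := by
    rw [ofNat_smul_eq_nsmul, nsmul_eq_mul, mul_one]
    noncomm_ring
    rw [hT]
    norm_num
  rw [smul_mul_smul_comm, smul_mul_smul_comm, ← smul_add, h, smul_smul]
  norm_num

lemma Lop_mul_self_add_Rop_mul_self {a : ℕ → ℋ →L[ℂ] ℋ} (ha : QBN a) (n : ℕ) :
    Lop a n * Lop a n + Rop a n * Rop a n = 1 :=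
  half_sub_one_sq_add_half_add_one_sq (ha.adjoint_add_mul_self n)

lemma sum_Lam_Bop_mul_self (a : ℕ → ℋ →L[ℂ] ℋ) (n : ℕ) :
    ∑ e ∈ Lam, Bop a n e * Bop a n e = Lop a n * Lop a n + Rop a n * Rop a n := by
  rw [Lam, Finset.sum_pair (by decide)]
  simp [Bop]

namespace IsTensorD

variable {Hs : Type} [NormedAddCommGroup Hs] [InnerProductSpace ℂ Hs]
  {d : ℕ} {Hd : Type} [NormedAddCommGroup Hd] [InnerProductSpace ℂ Hd]
  {tpv : MultilinearMap ℂ (fun _ : Fin d => Hs) Hd}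
  {tp : (Fin d → Hs →L[ℂ] Hs) → (Hd →L[ℂ] Hd)}

lemma ext (htp : IsTensorD tpv tp) {f g : Hd →L[ℂ] Hd} (h : ∀ u, f (tpv u) = g (tpv u)) :
    f = g := by
  have hdense : Dense (Submodule.span ℂ (Set.range fun u => tpv u) : Set Hd) :=
    Submodule.dense_iff_topologicalClosure_eq_top.mpr htp.2.1
  exact ContinuousLinearMap.ext_on hdense (by rintro _ ⟨u, rfl⟩; exact h u)

lemma sum_piFinset_mul_eq_one (htp : IsTensorD tpv tp) {ι : Type*} (s : Finset ι)
    (A B : ι → Hs →L[ℂ] Hs) (hAB : ∑ e ∈ s, A e * B e = 1) :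
    ∑ v ∈ Fintype.piFinset fun _ => s, tp (fun j => A (v j)) * tp (fun j => B (v j)) = 1 := by
  refine htp.ext fun u => ?_
  simp only [sum_apply, mul_apply_eq_comp, one_apply_eq_self, htp.2.2]
  rw [← tpv.map_sum_finset (A := fun _ => s) (g := fun j e => A e (B e (u j)))]
  congr 1 with j
  simpa only [sum_apply, mul_apply_eq_comp, one_apply_eq_self] using congr($hAB (u j))

end IsTensorD

lemma conjK_eq_conjContinuousAlgEquiv {Hs Hd : Type} [NormedAddCommGroup Hs]
    [InnerProductSpace ℂ Hs] [NormedAddCommGroup Hd] [InnerProductSpace ℂ Hd]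
    (K : Hd ≃ₗᵢ[ℂ] Hs) (T : Hd →L[ℂ] Hd) :
    conjK K T = K.toContinuousLinearEquiv.conjContinuousAlgEquiv T :=
  rfl

theorem stmt4_general (a : ℕ → ℋ →L[ℂ] ℋ) (ha : QBN a)
    (d : ℕ)
    (Hd : Type) [NormedAddCommGroup Hd] [InnerProductSpace ℂ Hd]
    (tpv : MultilinearMap ℂ (fun _ : Fin d => ℋ) Hd)
    (tp : (Fin d → ℋ →L[ℂ] ℋ) → (Hd →L[ℂ] Hd))
    (htp : IsTensorD tpv tp)
    (K : Hd ≃ₗᵢ[ℂ] ℋ) (n : ℕ) :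
    ∑ v ∈ LamD d, Cop a tp K n v * Cop a tp K n v = 1 := by
  have hB : ∑ e ∈ Lam, Bop a n e * Bop a n e = 1 := by
    rw [sum_Lam_Bop_mul_self, Lop_mul_self_add_Rop_mul_self ha]
  simp only [Cop, conjK_eq_conjContinuousAlgEquiv, ← map_mul, ← map_sum]
  rw [LamD, htp.sum_piFinset_mul_eq_one Lam _ _ hB, map_one]

/-- For every `n`, `∑_{ε ∈ Λ^d} C_n^{(ε)} C_n^{(ε)} = I`. -/
theorem stmt4 (a : ℕ → ℋ →L[ℂ] ℋ) (ha : QBN a)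
    (d : ℕ) (hd : 2 ≤ d)
    (Hd : Type) [NormedAddCommGroup Hd] [InnerProductSpace ℂ Hd] [CompleteSpace Hd]
    (tpv : MultilinearMap ℂ (fun _ : Fin d => ℋ) Hd)
    (tp : (Fin d → ℋ →L[ℂ] ℋ) → (Hd →L[ℂ] Hd))
    (htp : IsTensorD tpv tp)
    (K : Hd ≃ₗᵢ[ℂ] ℋ) (n : ℕ) :
    ∑ v ∈ LamD d, Cop a tp K n v * Cop a tp K n v = 1 :=
  stmt4_general a ha d Hd tpv tp htp K n
end
end

section
/- Let (ω^{(n)})_{n≥0} satisfy ω^{(n+1)} = 𝔍_n^{(d)} ω^{(n)} for all n ≥ 0 (the nucleus sequence of the d-dimensional open QBN walk), and suppose that ω^{(0)}(x) = K (ρ_1^{(0)}(x_1) ⊗ ⋯ ⊗ ρ_d^{(0)}(x_d)) K⁻¹ for all x = (x_1, …, x_d) ∈ ℤ^d, where ρ_1^{(0)}, …, ρ_d^{(0)} are 1-dimensional nucleuses on H. Then for every n ≥ 1 one has ω^{(n)}(x) = K (ρ_1^{(n)}(x_1) ⊗ ⋯ ⊗ ρ_d^{(n)}(x_d)) K⁻¹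 for all x ∈ ℤ^d, where ρ_j^{(n)} = (𝔍_{n−1} ∘ ⋯ ∘ 𝔍_0) ρ_j^{(0)} for j = 1, …, d. In particular the walk preserves separability of states. -/
/- Common setup: quantum Bernoulli noises on `ℋ = ℓ²(Γ)`, `Γ` = finite subsets of `ℕ`. -/

noncomputable section

open ContinuousLinearMap Filter

/-!
Both evolutions are sums of conjugations, and an elementary tensor operator
`C_n^{(ε)} = K (⊗_j B_n^{(ε_j)}) K⁻¹` conjugates a product `K (⊗_j ρ_j) K⁻¹` factorwise.
Expanding `⊗_j (∑_{e ∈ Λ} B_n^{(e)} ρ_j(x_j - e) B_n^{(e)})` by multilinearity gives a sum over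
`Λ^d`, which is exactly `𝔍_n^{(d)}` applied to the product nucleus; so one step of the
`d`-dimensional walk is the tensor product of one step of each 1-dimensional walk, and induction
on `n` finishes.
-/

section conjK

variable {Hs Hd : Type} [NormedAddCommGroup Hs] [InnerProductSpace ℂ Hs]
  [NormedAddCommGroup Hd] [InnerProductSpace ℂ Hd] (K : Hd ≃ₗᵢ[ℂ] Hs)

theorem conjK_mul (S T : Hd →L[ℂ] Hd) : conjK K S * conjK K T = conjK K (S * T) := by
  ext x
  simp [conjK]

theorem conjK_sum {ι : Type} (s : Finset ι) (F : ι → Hd →L[ℂ] Hd) :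
    conjK K (∑ i ∈ s, F i) = ∑ i ∈ s, conjK K (F i) := by
  ext x
  simp [conjK, sum_apply]

end conjK

namespace IsTensorD

variable {Hs : Type} [NormedAddCommGroup Hs] [InnerProductSpace ℂ Hs]
  {d : ℕ} {Hd : Type} [NormedAddCommGroup Hd] [InnerProductSpace ℂ Hd]
  {tpv : MultilinearMap ℂ (fun _ : Fin d => Hs) Hd} {tp : (Fin d → Hs →L[ℂ] Hs) → (Hd →L[ℂ] Hd)}

theorem ext_tpv (htp : IsTensorD tpv tp) {S T : Hd →L[ℂ] Hd} (h : ∀ u, S (tpv u) = T (tpv u)) :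
    S = T :=
  ContinuousLinearMap.ext_on (Submodule.dense_iff_topologicalClosure_eq_top.mpr htp.2.1)
    (by rintro _ ⟨u, rfl⟩; exact h u)

theorem tp_mul (htp : IsTensorD tpv tp) (A B : Fin d → Hs →L[ℂ] Hs) :
    tp A * tp B = tp fun j => A j * B j :=
  htp.ext_tpv fun u => by simp only [mul_apply_eq_comp, htp.2.2]

theorem tp_sum_piFinset (htp : IsTensorD tpv tp) {ι : Type} [DecidableEq ι]
    (s : Fin d → Finset ι) (F : Fin d → ι → Hs →L[ℂ] Hs) :
    tp (fun j => ∑ e ∈ s j, F j e) = ∑ v ∈ Fintype.piFinset s, tp fun j => F j (v j) :=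
  htp.ext_tpv fun u => by
    simp only [htp.2.2, sum_apply, MultilinearMap.map_sum_finset]

end IsTensorD

theorem Jmap1_eq_sum_Lam (a : ℕ → ℋ →L[ℂ] ℋ) (n : ℕ) (ρ : ℤ → ℋ →L[ℂ] ℋ) (y : ℤ) :
    Jmap1 a n ρ y = ∑ e ∈ Lam, Bop a n e * ρ (y - e) * Bop a n e := by
  rw [Lam, Finset.sum_pair (by decide)]
  simp [Jmap1, Bop, sub_neg_eq_add]

theorem JmapD_conjK_tp {d : ℕ} {Hd : Type} [NormedAddCommGroup Hd] [InnerProductSpace ℂ Hd]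
    {tpv : MultilinearMap ℂ (fun _ : Fin d => ℋ) Hd} {tp : (Fin d → ℋ →L[ℂ] ℋ) → (Hd →L[ℂ] Hd)}
    (htp : IsTensorD tpv tp) (a : ℕ → ℋ →L[ℂ] ℋ) (K : Hd ≃ₗᵢ[ℂ] ℋ) (n : ℕ)
    (ρ : Fin d → ℤ → ℋ →L[ℂ] ℋ) (x : Fin d → ℤ) :
    JmapD a tp K n (fun y => conjK K (tp fun j => ρ j (y j))) x =
      conjK K (tp fun j => Jmap1 a n (ρ j) (x j)) := by
  simp only [Jmap1_eq_sum_Lam, htp.tp_sum_piFinset, conjK_sum, JmapD, Cop, LamD, conjK_mul, htp.tp_mul]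
  rfl

theorem stmt12_general (a : ℕ → ℋ →L[ℂ] ℋ)
    (d : ℕ)
    (Hd : Type) [NormedAddCommGroup Hd] [InnerProductSpace ℂ Hd]
    (tpv : MultilinearMap ℂ (fun _ : Fin d => ℋ) Hd)
    (tp : (Fin d → ℋ →L[ℂ] ℋ) → (Hd →L[ℂ] Hd))
    (htp : IsTensorD tpv tp)
    (K : Hd ≃ₗᵢ[ℂ] ℋ)
    (ρ : Fin d → ℤ → ℋ →L[ℂ] ℋ)
    (ω : ℕ → (Fin d → ℤ) → ℋ →L[ℂ] ℋ)
    (hev : ∀ n : ℕ, ω (n + 1) = JmapD a tp K n (ω n))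
    (hinit : ∀ x : Fin d → ℤ, ω 0 x = conjK K (tp fun j => ρ j (x j))) :
    ∀ n : ℕ, 1 ≤ n → ∀ x : Fin d → ℤ,
      ω n x = conjK K (tp fun j => seqJ a (ρ j) n (x j)) := by
  suffices h : ∀ n, ω n = fun x => conjK K (tp fun j => seqJ a (ρ j) n (x j)) from
    fun n _ x => congrFun (h n) x
  intro n
  induction n with
  | zero => exact funext hinit
  | succ n ih =>
    funext x
    rw [hev, ih, JmapD_conjK_tp htp]
    rfl

/-- Separability-preserving property: if the initial nucleus factorizes as
`ω⁽⁰⁾(x) = K (ρ_1⁽⁰⁾(x_1) ⊗ ⋯ ⊗ ρ_d⁽⁰⁾(x_d)) K⁻¹` with 1-dimensional nucleuses `ρ_j⁽⁰⁾`, then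
for every `n ≥ 1`, `ω⁽ⁿ⁾(x) = K (ρ_1⁽ⁿ⁾(x_1) ⊗ ⋯ ⊗ ρ_d⁽ⁿ⁾(x_d)) K⁻¹` with
`ρ_j⁽ⁿ⁾ = (𝔍_{n-1} ∘ ⋯ ∘ 𝔍_0) ρ_j⁽⁰⁾`. -/
theorem stmt12 (a : ℕ → ℋ →L[ℂ] ℋ) (ha : QBN a)
    (d : ℕ) (hd : 2 ≤ d)
    (Hd : Type) [NormedAddCommGroup Hd] [InnerProductSpace ℂ Hd] [CompleteSpace Hd]
    (tpv : MultilinearMap ℂ (fun _ : Fin d => ℋ) Hd)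
    (tp : (Fin d → ℋ →L[ℂ] ℋ) → (Hd →L[ℂ] Hd))
    (htp : IsTensorD tpv tp)
    (K : Hd ≃ₗᵢ[ℂ] ℋ)
    (ρ : Fin d → ℤ → ℋ →L[ℂ] ℋ) (hρ : ∀ j, IsNucleusOn Z (ρ j))
    (ω : ℕ → (Fin d → ℤ) → ℋ →L[ℂ] ℋ)
    (hev : ∀ n : ℕ, ω (n + 1) = JmapD a tp K n (ω n))
    (hinit : ∀ x : Fin d → ℤ, ω 0 x = conjK K (tp fun j => ρ j (x j))) :
    ∀ n : ℕ, 1 ≤ n → ∀ x : Fin d → ℤ,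
      ω n x = conjK K (tp fun j => seqJ a (ρ j) n (x j)) :=
  stmt12_general a d Hd tpv tp htp K ρ ω hev hinit
end
end

section
/- Fix σ ∈ Γ, let ρ_σ be the 1-dimensional nucleus with ρ_σ(0) = |Z_σ⟩⟨Z_σ| and ρ_σ(x) = 0 for x ≠ 0, and let ρ^{(0)} = ρ_σ, ρ^{(n+1)} = 𝔍_n ρ^{(n)} for n ≥ 0. Then for every n ≥ 1 and x ∈ ℤ one has Tr[ρ^{(n)}(x)] = 2^{−n}·C(n, j) if x = n − 2j for some integer j with 0 ≤ j ≤ n, and Tr[ρ^{(n)}(x)] = 0 otherwise, where C(n, j) denotes the binomial coefficient. -/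
/- Common setup: quantum Bernoulli noises on `ℋ = ℓ²(Γ)`, `Γ` = finite subsets of `ℕ`. -/

noncomputable section

open ContinuousLinearMap Filter

/-! `L_n = (S_n - 1)/2` and `R_n = (S_n + 1)/2`, where `S_n = ∂_n* + ∂_n` is the flip
`Z_τ ↦ Z_{τ ∆ {n}}`, are self-adjoint, so `⟪Z_τ, B T B Z_τ⟫ = ⟪B Z_τ, T B Z_τ⟫`, and conjugating
by either of them halves the trace as soon as `T` has no matrix elements between `Z_τ` and
`Z_{τ ∆ {n}}`. This holds for `ρ⁽ⁿ⁾(x)`: its matrix elements between `Z_α` and `Z_β` vanish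
unless `α` and `β` agree on all modes `≥ n`, an invariant that `𝔍_n` carries from `n` to `n + 1`
because `S_n` only touches mode `n`. Hence `x ↦ Tr ρ⁽ⁿ⁾(x)` follows the recursion of the simple
symmetric random walk started at `0`, whose law after `n` steps is binomial. -/

open scoped InnerProductSpace symmDiff

section ConjugationTrace

variable {E ι : Type} [NormedAddCommGroup E] [InnerProductSpace ℂ E]
  {b : ι → E} {e : ι → ι} {B T : E →L[ℂ] E} {c : ℂ}

lemma trB_add {T' : E →L[ℂ] E} (hT : HasFiniteTrace b T) (hT' : HasFiniteTrace b T') :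
    trB b (T + T') = trB b T + trB b T' := by
  rw [trB, trB, trB, ← hT.tsum_add hT']
  simp only [add_apply, inner_add_right, Complex.add_re]

lemma HasFiniteTrace.add {T' : E →L[ℂ] E} (hT : HasFiniteTrace b T)
    (hT' : HasFiniteTrace b T') : HasFiniteTrace b (T + T') := by
  simpa only [HasFiniteTrace, add_apply, inner_add_right, Complex.add_re] using
    Summable.add hT hT'

variable (hB : (B : E →ₗ[ℂ] E).IsSymmetric)
  (hBb : ∀ i, B (b i) = (2 : ℂ)⁻¹ • (b (e i) + c • b i))
include hB hBb

lemma inner_conj_eq_zero {i j : ι}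
    (hT : ∀ i' j', (i' = e i ∨ i' = i) → (j' = e j ∨ j' = j) → ⟪b i', T (b j')⟫_ℂ = 0) :
    ⟪b i, (B * T * B) (b j)⟫_ℂ = 0 := by
  rw [mul_apply_eq_comp, mul_apply_eq_comp, ← hB.apply_clm, hBb, hBb]
  simp only [map_smul, map_add, inner_smul_left, inner_smul_right, inner_add_left,
    inner_add_right, hT _ _ (.inl rfl) (.inl rfl), hT _ _ (.inl rfl) (.inr rfl),
    hT _ _ (.inr rfl) (.inl rfl), hT _ _ (.inr rfl) (.inr rfl)]
  ring

variable (hc : ‖c‖ = 1) (he : Function.Involutive e) (hT : ∀ i, ⟪b (e i), T (b i)⟫_ℂ = 0)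
include hc he hT

lemma re_inner_conj (i : ι) :
    (⟪b i, (B * T * B) (b i)⟫_ℂ).re
      = ((⟪b (e i), T (b (e i))⟫_ℂ).re + (⟪b i, T (b i)⟫_ℂ).re) / 4 := by
  have hcross : ⟪b i, T (b (e i))⟫_ℂ = 0 := by simpa only [he i] using hT (e i)
  have hcc : (starRingEnd ℂ) c * c = 1 := by
    rw [Complex.conj_mul', hc]; norm_num
  rw [mul_apply_eq_comp, mul_apply_eq_comp, ← hB.apply_clm, hBb]
  simp only [map_smul, map_add, inner_smul_left, inner_smul_right, inner_add_left,
    inner_add_right, hT i, hcross]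
  rw [← Complex.add_re, ← Complex.div_ofNat_re, map_inv₀, map_ofNat]
  congr 1
  linear_combination (⟪b i, T (b i)⟫_ℂ / 4) * hcc

lemma HasFiniteTrace.conj (hTb : HasFiniteTrace b T) : HasFiniteTrace b (B * T * B) := by
  have hTe : Summable fun i => (⟪b (e i), T (b (e i))⟫_ℂ).re := he.toPerm.summable_iff.2 hTb
  simpa only [HasFiniteTrace, re_inner_conj hB hBb hc he hT] using (hTe.add hTb).div_const 4

lemma trB_conj (hTb : HasFiniteTrace b T) : trB b (B * T * B) = trB b T / 2 := by
  have hTe : Summable fun i => (⟪b (e i), T (b (e i))⟫_ℂ).re := he.toPerm.summable_iff.2 hTb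
  have hsum_e : ∑' i, (⟪b (e i), T (b (e i))⟫_ℂ).re = trB b T :=
    he.toPerm.tsum_eq fun i => (⟪b i, T (b i)⟫_ℂ).re
  simp only [trB, re_inner_conj hB hBb hc he hT]
  rw [tsum_div_const, hTe.tsum_add hTb, hsum_e, trB]
  ring

end ConjugationTrace

lemma inner_Z_Z (α β : Finset ℕ) : ⟪Z α, Z β⟫_ℂ = if α = β then 1 else 0 := by
  rw [Z, Z, lp.inner_single_left, lp.single_apply]
  split_ifs <;> simp_all

lemma QBN.adjoint_add_apply {a : ℕ → ℋ →L[ℂ] ℋ} (ha : QBN a) (n : ℕ) (τ : Finset ℕ) :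
    (adjoint (a n) + a n) (Z τ) = Z (τ ∆ {n}) := by
  rw [add_apply, ha.1, ha.2]
  by_cases hn : n ∈ τ
  · simp only [hn, if_true, zero_add]
    congr 1; ext m; by_cases m = n <;> simp_all [Finset.mem_symmDiff]
  · simp only [hn, if_false, add_zero]
    congr 1; ext m; by_cases m = n <;> simp_all [Finset.mem_symmDiff]

lemma Lop_apply_Z {a : ℕ → ℋ →L[ℂ] ℋ} (ha : QBN a) (n : ℕ) (τ : Finset ℕ) :
    Lop a n (Z τ) = (2 : ℂ)⁻¹ • (Z (τ ∆ {n}) + (-1 : ℂ) • Z τ) := by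
  rw [Lop, smul_apply, sub_apply, ha.adjoint_add_apply, one_apply_eq_self, neg_one_smul,
    sub_eq_add_neg]

lemma Rop_apply_Z {a : ℕ → ℋ →L[ℂ] ℋ} (ha : QBN a) (n : ℕ) (τ : Finset ℕ) :
    Rop a n (Z τ) = (2 : ℂ)⁻¹ • (Z (τ ∆ {n}) + (1 : ℂ) • Z τ) := by
  rw [Rop, smul_apply, add_apply, ha.adjoint_add_apply, one_apply_eq_self, one_smul]

lemma isSelfAdjoint_Lop (a : ℕ → ℋ →L[ℂ] ℋ) (n : ℕ) : IsSelfAdjoint (Lop a n) :=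
  .smul (by simp) ((IsSelfAdjoint.star_add_self (a n)).sub (.one _))

lemma isSelfAdjoint_Rop (a : ℕ → ℋ →L[ℂ] ℋ) (n : ℕ) : IsSelfAdjoint (Rop a n) :=
  .smul (by simp) ((IsSelfAdjoint.star_add_self (a n)).add (.one _))

def IsBlockDiagonalAbove (n : ℕ) (T : ℋ →L[ℂ] ℋ) : Prop :=
  ∀ α β : Finset ℕ, ¬ α ∆ β ⊆ Finset.range n → ⟪Z α, T (Z β)⟫_ℂ = 0

lemma IsBlockDiagonalAbove.add {n : ℕ} {T T' : ℋ →L[ℂ] ℋ} (hT : IsBlockDiagonalAbove n T)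
    (hT' : IsBlockDiagonalAbove n T') : IsBlockDiagonalAbove n (T + T') := fun α β h => by
  rw [add_apply, inner_add_right, hT α β h, hT' α β h, add_zero]

lemma IsBlockDiagonalAbove.inner_symmDiff_singleton {n : ℕ} {T : ℋ →L[ℂ] ℋ}
    (hT : IsBlockDiagonalAbove n T) (τ : Finset ℕ) : ⟪Z (τ ∆ {n}), T (Z τ)⟫_ℂ = 0 :=
  hT _ _ (by simp [symmDiff_symmDiff_self'])

section Conjugation

variable {n : ℕ} {B T : ℋ →L[ℂ] ℋ} {c : ℂ} (hB : IsSelfAdjoint B)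
  (hBZ : ∀ τ, B (Z τ) = (2 : ℂ)⁻¹ • (Z (τ ∆ {n}) + c • Z τ)) (hT : IsBlockDiagonalAbove n T)
include hB hBZ hT

lemma IsBlockDiagonalAbove.conj : IsBlockDiagonalAbove (n + 1) (B * T * B) := by
  intro α β hαβ
  refine inner_conj_eq_zero hB.isSymmetric hBZ fun α' β' hα' hβ' => hT α' β' fun h => hαβ ?_
  intro m hm
  by_contra hmn
  rw [Finset.mem_range, not_lt] at hmn
  have hm' : m ∈ α' ∆ β' := by
    have hmn' : m ≠ n := by omega
    rcases hα' with rfl | rfl <;> rcases hβ' with rfl | rfl <;>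
      simp_all [Finset.mem_symmDiff]
  have := Finset.mem_range.1 (h hm')
  omega

variable (hc : ‖c‖ = 1)
include hc

lemma HasFiniteTrace.conj_flip (hTZ : HasFiniteTrace Z T) :
    HasFiniteTrace Z (B * T * B) :=
  hTZ.conj hB.isSymmetric hBZ hc (symmDiff_left_involutive _) hT.inner_symmDiff_singleton

lemma trH_conj_flip (hTZ : HasFiniteTrace Z T) : trH (B * T * B) = trH T / 2 :=
  trB_conj hB.isSymmetric hBZ hc (symmDiff_left_involutive _) hT.inner_symmDiff_singleton hTZ

end Conjugation

lemma inner_Z_dyad_Z (α β σ : Finset ℕ) :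
    ⟪Z α, dyad (Z σ) (Z σ) (Z β)⟫_ℂ = if α = σ ∧ β = σ then 1 else 0 := by
  simp only [dyad, comp_apply, innerSL_apply_apply, toSpanSingleton_apply, inner_smul_right,
    inner_Z_Z]
  by_cases hα : α = σ <;> by_cases hβ : β = σ <;> simp [hα, hβ, eq_comm]

lemma rhoPoint_spec (σ : Finset ℕ) (x : ℤ) :
    (HasFiniteTrace Z (rhoPoint σ x) ∧ IsBlockDiagonalAbove 0 (rhoPoint σ x)) ∧
      trH (rhoPoint σ x) = if x = 0 then 1 else 0 := by
  by_cases hx : x = 0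
  · have hdiag (τ : Finset ℕ) :
        (⟪Z τ, dyad (Z σ) (Z σ) (Z τ)⟫_ℂ).re = if τ = σ then 1 else 0 := by
      simp only [inner_Z_dyad_Z, and_self]; split_ifs <;> simp
    simp only [rhoPoint, hx, if_true, HasFiniteTrace, trH, trB, hdiag]
    refine ⟨⟨(hasSum_ite_eq σ 1).summable, fun α β hαβ => ?_⟩, tsum_ite_eq σ 1⟩
    rw [inner_Z_dyad_Z, if_neg]
    rintro ⟨rfl, rfl⟩
    simp at hαβ
  · simp [rhoPoint, hx, HasFiniteTrace, IsBlockDiagonalAbove, trH, trB]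

section Evolution

variable {a : ℕ → ℋ →L[ℂ] ℋ} (ha : QBN a) {n : ℕ} {ρ : ℤ → ℋ →L[ℂ] ℋ}
  (hρ : ∀ x, HasFiniteTrace Z (ρ x) ∧ IsBlockDiagonalAbove n (ρ x))
include ha hρ

lemma Jmap1_invariant (x : ℤ) :
    HasFiniteTrace Z (Jmap1 a n ρ x) ∧ IsBlockDiagonalAbove (n + 1) (Jmap1 a n ρ x) := by
  obtain ⟨hL, hL'⟩ := hρ (x + 1)
  obtain ⟨hR, hR'⟩ := hρ (x - 1)
  have hLop := Lop_apply_Z ha n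
  have hRop := Rop_apply_Z ha n
  exact ⟨(hL.conj_flip (isSelfAdjoint_Lop a n) hLop hL' (by simp)).add
      (hR.conj_flip (isSelfAdjoint_Rop a n) hRop hR' (by simp)),
    (hL'.conj (isSelfAdjoint_Lop a n) hLop).add (hR'.conj (isSelfAdjoint_Rop a n) hRop)⟩

lemma trH_Jmap1 (x : ℤ) :
    trH (Jmap1 a n ρ x) = (trH (ρ (x + 1)) + trH (ρ (x - 1))) / 2 := by
  obtain ⟨hL, hL'⟩ := hρ (x + 1)
  obtain ⟨hR, hR'⟩ := hρ (x - 1)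
  have hLop := Lop_apply_Z ha n
  have hRop := Rop_apply_Z ha n
  calc trH (Jmap1 a n ρ x)
      = trH (Lop a n * ρ (x + 1) * Lop a n) + trH (Rop a n * ρ (x - 1) * Rop a n) :=
        trB_add (hL.conj_flip (isSelfAdjoint_Lop a n) hLop hL' (by simp))
          (hR.conj_flip (isSelfAdjoint_Rop a n) hRop hR' (by simp))
    _ = (trH (ρ (x + 1)) + trH (ρ (x - 1))) / 2 := by
        rw [trH_conj_flip (isSelfAdjoint_Lop a n) hLop hL' (by simp) hL,
          trH_conj_flip (isSelfAdjoint_Rop a n) hRop hR' (by simp) hR, add_div]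

end Evolution

def walkProb : ℕ → ℤ → ℝ
  | 0, x => if x = 0 then 1 else 0
  | n + 1, x => (walkProb n (x + 1) + walkProb n (x - 1)) / 2

lemma walkProb_eq_zero {n : ℕ} {x : ℤ} (hx : ∀ j : ℕ, j ≤ n → x ≠ n - 2 * j) :
    walkProb n x = 0 := by
  induction n generalizing x with
  | zero => simpa [walkProb] using hx 0 le_rfl
  | succ n ih =>
    have hup : walkProb n (x + 1) = 0 :=
      ih fun j hj h => hx (j + 1) (by omega) (by push_cast; omega)
    have hdown : walkProb n (x - 1) = 0 :=
      ih fun j hj h => hx j (by omega) (by push_cast; omega)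
    rw [walkProb, hup, hdown, add_zero, zero_div]

lemma walkProb_sub_two_mul (n j : ℕ) : walkProb n (n - 2 * j) = n.choose j / 2 ^ n := by
  induction n generalizing j with
  | zero => cases j <;> simp [walkProb]; omega
  | succ n ih =>
    rw [walkProb, pow_succ]
    cases j with
    | zero =>
      have hup : walkProb n (n + 1 + 1) = 0 := walkProb_eq_zero fun j hj h => by omega
      have hdown := ih 0
      simp only [Nat.cast_zero, mul_zero, sub_zero] at hdown ⊢
      rw [Nat.cast_add_one, add_sub_cancel_right, hup, hdown, Nat.choose_zero_right,
        Nat.choose_zero_right]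
      ring
    | succ k =>
      have hup := ih k
      have hdown := ih (k + 1)
      push_cast at hup hdown ⊢
      rw [show (n : ℤ) + 1 - 2 * (k + 1) + 1 = n - 2 * k by ring,
        show (n : ℤ) + 1 - 2 * (k + 1) - 1 = n - 2 * (k + 1) by ring, hup, hdown,
        Nat.choose_succ_succ', Nat.cast_add]
      ring

lemma seqJ_rhoPoint_spec {a : ℕ → ℋ →L[ℂ] ℋ} (ha : QBN a) (σ : Finset ℕ) (n : ℕ) (x : ℤ) :
    (HasFiniteTrace Z (seqJ a (rhoPoint σ) n x) ∧
      IsBlockDiagonalAbove n (seqJ a (rhoPoint σ) n x)) ∧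
      trH (seqJ a (rhoPoint σ) n x) = walkProb n x := by
  induction n generalizing x with
  | zero => exact rhoPoint_spec σ x
  | succ n ih =>
    refine ⟨Jmap1_invariant ha (fun y => (ih y).1) x, ?_⟩
    rw [seqJ, trH_Jmap1 ha (fun y => (ih y).1) x, (ih _).2, (ih _).2, walkProb]

theorem stmt14_general (a : ℕ → ℋ →L[ℂ] ℋ) (ha : QBN a) (σ : Finset ℕ) (n : ℕ) :
    (∀ j : ℕ, j ≤ n →
      trH (seqJ a (rhoPoint σ) n ((n : ℤ) - 2 * (j : ℤ))) = (n.choose j : ℝ) / 2 ^ n) ∧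
    (∀ x : ℤ, (∀ j : ℕ, j ≤ n → x ≠ (n : ℤ) - 2 * (j : ℤ)) →
      trH (seqJ a (rhoPoint σ) n x) = 0) := by
  have htr (x : ℤ) := (seqJ_rhoPoint_spec ha σ n x).2
  exact ⟨fun j _ => by rw [htr, walkProb_sub_two_mul],
    fun x hx => by rw [htr, walkProb_eq_zero hx]⟩

/-- For the nucleus `ρ_σ` concentrated at the origin with value `|Z_σ⟩⟨Z_σ|` and its
evolution `ρ⁽ⁿ⁺¹⁾ = 𝔍_n ρ⁽ⁿ⁾`, one has for `n ≥ 1`: `Tr[ρ⁽ⁿ⁾(x)] = 2⁻ⁿ C(n,j)` if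
`x = n - 2j` with `0 ≤ j ≤ n`, and `Tr[ρ⁽ⁿ⁾(x)] = 0` otherwise. -/
theorem stmt14 (a : ℕ → ℋ →L[ℂ] ℋ) (ha : QBN a) (σ : Finset ℕ) (n : ℕ) (hn : 1 ≤ n) :
    (∀ j : ℕ, j ≤ n →
      trH (seqJ a (rhoPoint σ) n ((n : ℤ) - 2 * (j : ℤ))) = (n.choose j : ℝ) / 2 ^ n) ∧
    (∀ x : ℤ, (∀ j : ℕ, j ≤ n → x ≠ (n : ℤ) - 2 * (j : ℤ)) →
      trH (seqJ a (rhoPoint σ) n x) = 0) :=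
  stmt14_general a ha σ n
end
end
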